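/- arXiv:2202.06904 — 6 statements merged into one kernel-verified Lean document; each statement's English description precedes it below -/
import Mathlib

section
/- Let s ≥ 1 and let 1 ≤ i_1 < i_2 < ⋯ < i_s be a strictly increasing sequence of positive integers. Let g ∈ ℂ[y] be a polynomial with g(0) = 0 and deg g < i_s, and let K = ∏_{k=1}^s ((x + g(y)) + m^{i_k}) ⊆ ℂ[x,y] be the associated tower. Then the colength of K satisfies dim_ℂ ℂ[x,y]/K = ∑_{k=1}^s ∑_{j=1}^k i_j. -/
/-!
The shear `x ↦ x + g(y)`, `y ↦ y` is an automorphism of `ℂ[x,y]` which fixes `m` (as `g(0) = 0`)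
and sends `(x)` to `(x + g(y))`, so it carries the monomial tower `∏ₖ ((x) + m^{iₖ})` onto the
tower of `g`, and it suffices to treat `g = 0`. There `(x) + m^{i} = (x, y^{i})`, and since `i` is
monotone the product is generated by the monomials `x^{s-t} y^{i₁ + ⋯ + i_t}`, `0 ≤ t ≤ s`. Its
standard monomials are the `x^a y^b` with `a < s` and `b < i₁ + ⋯ + i_{s-a}`; counting them gives
the colength.
-/

open MvPolynomial

/-- The maximal ideal `m = (x, y)` of the origin in `ℂ[x,y]`. -/
noncomputable def mxy : Ideal (MvPolynomial (Fin 2) ℂ) :=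
  Ideal.span {X 0, X 1}

theorem Ideal.sup_pow_le_sup_pow {R : Type*} [CommSemiring R] (I J : Ideal R) (n : ℕ) :
    (I ⊔ J) ^ n ≤ I ⊔ J ^ n := by
  induction n with
  | zero => simp
  | succ n ih =>
    calc (I ⊔ J) ^ (n + 1) = (I ⊔ J) ^ n * (I ⊔ J) := pow_succ _ _
      _ ≤ (I ⊔ J ^ n) * (I ⊔ J) := Ideal.mul_mono_left ih
      _ ≤ I ⊔ J ^ (n + 1) := by
        rw [Ideal.mul_sup, Ideal.sup_mul, Ideal.sup_mul, pow_succ]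
        exact sup_le (sup_le (le_sup_of_le_left Ideal.mul_le_left)
          (le_sup_of_le_left Ideal.mul_le_right))
          (sup_le (le_sup_of_le_left Ideal.mul_le_left) le_sup_right)

theorem MvPolynomial.finrank_quotient_span_monomial {σ K : Type*} [Field K]
    (S : Set (σ →₀ ℕ)) (D : Finset (σ →₀ ℕ)) (hD : ∀ m, m ∈ D ↔ ∀ e ∈ S, ¬e ≤ m) :
    Module.finrank K (MvPolynomial σ K ⧸ Ideal.span ((fun e => monomial e (1 : K)) '' S)) =
      D.card := by
  classical
  set I := Ideal.span ((fun e => monomial e (1 : K)) '' S)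
  let Φ : MvPolynomial σ K →ₗ[K] (D → K) := LinearMap.pi fun d => lcoeff K d.1
  have hΦ : ∀ p (d : D), Φ p d = coeff d p := fun _ _ => rfl
  have hker : LinearMap.ker Φ = I.restrictScalars K := by
    ext p
    simp only [Φ, LinearMap.ker_pi, Submodule.mem_iInf, LinearMap.mem_ker, lcoeff_apply,
      Submodule.restrictScalars_mem, I, mem_ideal_span_monomial_image, Subtype.forall, hD,
      mem_support_iff]
    constructor
    · intro h m hm
      by_contra! hcon
      exact hm (h m hcon)
    · intro h m hm
      by_contra hcon
      obtain ⟨e, he, hle⟩ := h m hcon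
      exact hm e he hle
  have hsurj : Function.Surjective Φ := fun f => by
    refine ⟨∑ d : D, monomial d.1 (f d), ?_⟩
    ext d
    simp [hΦ, coeff_sum, coeff_monomial]
  calc Module.finrank K (MvPolynomial σ K ⧸ I)
      = Module.finrank K (MvPolynomial σ K ⧸ LinearMap.ker Φ) := by
        rw [hker]; exact (Submodule.Quotient.restrictScalarsEquiv K I).finrank_eq.symm
    _ = Module.finrank K (D → K) := (Φ.quotKerEquivOfSurjective hsurj).finrank_eq
    _ = D.card := by simp

theorem MvPolynomial.monomial_mem_span_monomial_image {σ R : Type*} [CommSemiring R]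
    {S : Set (σ →₀ ℕ)} {e m : σ →₀ ℕ} (he : e ∈ S) (hle : e ≤ m) :
    monomial m (1 : R) ∈ Ideal.span ((fun e => monomial e (1 : R)) '' S) :=
  mem_ideal_span_monomial_image.mpr fun _ hxi =>
    ⟨e, he, (Finset.mem_singleton.mp (support_monomial_subset hxi)) ▸ hle⟩

namespace MvPolynomial

variable {R : Type*} [CommRing R]

noncomputable def shear (g : Polynomial R) :
    MvPolynomial (Fin 2) R ≃ₐ[R] MvPolynomial (Fin 2) R :=
  AlgEquiv.ofAlgHom (aeval ![X 0 + Polynomial.aeval (X 1) g, X 1])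
    (aeval ![X 0 - Polynomial.aeval (X 1) g, X 1])
    (by ext j; fin_cases j <;> simp [← Polynomial.aeval_algHom_apply])
    (by ext j; fin_cases j <;> simp [← Polynomial.aeval_algHom_apply])

@[simp]
theorem shear_X_zero (g : Polynomial R) :
    shear g (X 0) = X 0 + Polynomial.aeval (X 1) g := by
  simp [shear]

@[simp]
theorem shear_X_one (g : Polynomial R) : shear g (X 1) = X 1 := by
  simp [shear]

theorem map_shear_span_X (g : Polynomial R) (hg : g.eval 0 = 0) :
    (Ideal.span {X 0, X 1}).map (shear g) =
      Ideal.span {(X 0 : MvPolynomial (Fin 2) R), X 1} := by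
  obtain ⟨q, rfl⟩ : Polynomial.X ∣ g :=
    Polynomial.X_dvd_iff.mpr (by rwa [Polynomial.coeff_zero_eq_eval_zero])
  simp [Ideal.map_span, Set.image_pair]

end MvPolynomial

def partialSum (i : ℕ → ℕ) (t : ℕ) : ℕ := ∑ j ∈ Finset.Icc 1 t, i j

theorem partialSum_zero (i : ℕ → ℕ) : partialSum i 0 = 0 := rfl

theorem partialSum_succ (i : ℕ → ℕ) (t : ℕ) : partialSum i (t + 1) = partialSum i t + i (t + 1) :=
  Finset.sum_Icc_succ_top (Nat.le_add_left 1 t) i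

theorem partialSum_mono (i : ℕ → ℕ) : Monotone (partialSum i) := fun _ _ h =>
  Finset.sum_le_sum_of_subset (Finset.Icc_subset_Icc_right h)

noncomputable def towerExp (i : ℕ → ℕ) (n t : ℕ) : Fin 2 →₀ ℕ :=
  Finsupp.single 0 (n - t) + Finsupp.single 1 (partialSum i t)

theorem towerExp_le_iff (i : ℕ → ℕ) (n t : ℕ) (m : Fin 2 →₀ ℕ) :
    towerExp i n t ≤ m ↔ n - t ≤ m 0 ∧ partialSum i t ≤ m 1 := by
  simp [Finsupp.le_def, Fin.forall_fin_two, towerExp]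

theorem span_X_zero_add_mxy_pow (a : ℕ) :
    Ideal.span {X 0} + mxy ^ a = Ideal.span {(X 0 : MvPolynomial (Fin 2) ℂ), X 1 ^ a} := by
  have hmxy : mxy = Ideal.span {X 0} ⊔ Ideal.span {X 1} := by
    rw [mxy, Ideal.span_insert]
  apply le_antisymm
  · rw [Ideal.add_eq_sup, Ideal.span_insert]
    refine sup_le le_sup_left ((hmxy ▸ Ideal.sup_pow_le_sup_pow _ _ a).trans ?_)
    rw [Ideal.span_singleton_pow]
  · rw [Ideal.span_insert]
    refine sup_le le_sup_left (le_sup_of_le_right ?_)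
    rw [Ideal.span_singleton_le_iff_mem]
    have hX : (X 1 : MvPolynomial (Fin 2) ℂ) ∈ mxy := Ideal.subset_span (by simp)
    exact Ideal.pow_mem_pow hX a

theorem span_pair_mul_span_towerExp {i : ℕ → ℕ} {n : ℕ} (hi : MonotoneOn i (Set.Icc 1 (n + 1))) :
    Ideal.span {(X 0 : MvPolynomial (Fin 2) ℂ), X 1 ^ i (n + 1)} *
        Ideal.span ((fun e => monomial e 1) '' (towerExp i n '' Set.Iic n)) =
      Ideal.span ((fun e => monomial e 1) '' (towerExp i (n + 1) '' Set.Iic (n + 1))) := by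
  have hx : ∀ t ≤ n, towerExp i (n + 1) t = Finsupp.single 0 1 + towerExp i n t := by
    intro t ht
    ext j
    fin_cases j <;> simp [towerExp]
    omega
  have hy : ∀ t ≤ n,
      towerExp i (n + 1) (t + 1) ≤ Finsupp.single 1 (i (n + 1)) + towerExp i n t := by
    intro t ht
    have := hi ⟨le_add_self, by omega⟩ ⟨le_add_self, le_rfl⟩ (by omega : t + 1 ≤ n + 1)
    rw [towerExp_le_iff]
    simp [towerExp, partialSum_succ]
    omega
  have hyn : towerExp i (n + 1) (n + 1) = Finsupp.single 1 (i (n + 1)) + towerExp i n n := by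
    ext j
    fin_cases j <;> simp [towerExp, partialSum_succ, add_comm]
  apply le_antisymm
  · rw [Ideal.span_mul_span', Ideal.span_le]
    rintro _ ⟨p, hp, _, ⟨_, ⟨t, ht, rfl⟩, rfl⟩, rfl⟩
    rw [Set.mem_Iic] at ht
    dsimp only
    rcases hp with rfl | rfl
    · rw [← pow_one (X 0), ← monomial_single_add, ← hx t ht]
      exact Ideal.subset_span ⟨_, ⟨t, by simp; omega, rfl⟩, rfl⟩
    · rw [← monomial_single_add]
      exact monomial_mem_span_monomial_image ⟨t + 1, by simp; omega, rfl⟩ (hy t ht)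
  · rw [Ideal.span_le]
    rintro _ ⟨_, ⟨t, ht, rfl⟩, rfl⟩
    dsimp only
    rcases (Set.mem_Iic.mp ht).lt_or_eq with ht | rfl
    · rw [hx t (by omega), monomial_single_add, pow_one]
      exact Ideal.mul_mem_mul (Ideal.subset_span (by simp))
        (Ideal.subset_span ⟨_, ⟨t, by simp; omega, rfl⟩, rfl⟩)
    · rw [hyn, monomial_single_add]
      exact Ideal.mul_mem_mul (Ideal.subset_span (by simp))
        (Ideal.subset_span ⟨_, ⟨n, by simp, rfl⟩, rfl⟩)

noncomputable def monomialTower (i : ℕ → ℕ) (n : ℕ) : Ideal (MvPolynomial (Fin 2) ℂ) :=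
  ∏ k ∈ Finset.Icc 1 n, (Ideal.span {X 0} + mxy ^ i k)

theorem monomialTower_eq_span {i : ℕ → ℕ} {n : ℕ} (hi : MonotoneOn i (Set.Icc 1 n)) :
    monomialTower i n = Ideal.span ((fun e => monomial e 1) '' (towerExp i n '' Set.Iic n)) := by
  induction n with
  | zero =>
    have h0 : towerExp i 0 0 = 0 := by simp [towerExp, partialSum_zero]
    simp [monomialTower, Set.Iic, h0]
  | succ n ih =>
    rw [monomialTower, Finset.prod_Icc_succ_top (by omega), ← monomialTower,
      ih (hi.mono (Set.Icc_subset_Icc_right (by omega))), span_X_zero_add_mxy_pow, mul_comm,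
      span_pair_mul_span_towerExp hi]

theorem exists_towerExp_le_iff (i : ℕ → ℕ) (n : ℕ) (m : Fin 2 →₀ ℕ) :
    (∃ e ∈ towerExp i n '' Set.Iic n, e ≤ m) ↔ n ≤ m 0 ∨ partialSum i (n - m 0) ≤ m 1 := by
  simp only [Set.mem_image, Set.mem_Iic, exists_exists_and_eq_and, towerExp_le_iff]
  constructor
  · rintro ⟨t, ht, h0, h1⟩
    by_cases hn : n ≤ m 0
    · exact Or.inl hn
    · exact Or.inr ((partialSum_mono i (by omega)).trans h1)
  · rintro (h | h)
    · exact ⟨0, Nat.zero_le n, by omega, by simp [partialSum_zero]⟩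
    · exact ⟨n - m 0, Nat.sub_le n _, by omega, h⟩

noncomputable def towerStandardExps (i : ℕ → ℕ) (n : ℕ) : Finset (Fin 2 →₀ ℕ) :=
  ((Finset.range n).sigma fun a => Finset.range (partialSum i (n - a))).map
    ((Equiv.sigmaEquivProd ℕ ℕ).trans ((finTwoArrowEquiv ℕ).symm.trans
      Finsupp.equivFunOnFinite.symm)).toEmbedding

theorem mem_towerStandardExps (i : ℕ → ℕ) (n : ℕ) (m : Fin 2 →₀ ℕ) :
    m ∈ towerStandardExps i n ↔ m 0 < n ∧ m 1 < partialSum i (n - m 0) := by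
  rw [towerStandardExps, Finset.mem_map_equiv]
  simp

theorem card_towerStandardExps (i : ℕ → ℕ) (n : ℕ) :
    (towerStandardExps i n).card = ∑ k ∈ Finset.Icc 1 n, partialSum i k := by
  rw [towerStandardExps, Finset.card_map, Finset.card_sigma]
  simp only [Finset.card_range]
  exact Finset.sum_nbij' (fun a => n - a) (fun k => n - k) (by simp; omega) (by simp; omega)
    (by simp; omega) (by simp; omega) (by simp)

theorem finrank_quotient_monomialTower {i : ℕ → ℕ} {n : ℕ} (hi : MonotoneOn i (Set.Icc 1 n)) :
    Module.finrank ℂ (MvPolynomial (Fin 2) ℂ ⧸ monomialTower i n) =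
      ∑ k ∈ Finset.Icc 1 n, partialSum i k := by
  rw [monomialTower_eq_span hi,
    finrank_quotient_span_monomial _ (towerStandardExps i n), card_towerStandardExps]
  intro m
  simpa [mem_towerStandardExps, not_or] using (exists_towerExp_le_iff i n m).not.symm

noncomputable def tower (g : Polynomial ℂ) (i : ℕ → ℕ) (n : ℕ) : Ideal (MvPolynomial (Fin 2) ℂ) :=
  ∏ k ∈ Finset.Icc 1 n, (Ideal.span {X 0 + Polynomial.aeval (X 1) g} + mxy ^ i k)

theorem map_shear_monomialTower {g : Polynomial ℂ} (hg : g.eval 0 = 0) (i : ℕ → ℕ) (n : ℕ) :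
    (monomialTower i n).map (shear g) = tower g i n := by
  simp only [monomialTower, tower, ← Ideal.mapHom_apply, map_prod, map_add, map_pow]
  simp [Ideal.map_span, mxy, map_shear_span_X g hg]

theorem tower_colength_general (s : ℕ) (i : ℕ → ℕ)
    (hmono : ∀ k, 1 ≤ k → k < s → i k < i (k + 1))
    (g : Polynomial ℂ) (hg0 : g.eval 0 = 0) :
    Module.finrank ℂ
      (MvPolynomial (Fin 2) ℂ ⧸
        ∏ k ∈ Finset.Icc 1 s,
          (Ideal.span {(X 0 : MvPolynomial (Fin 2) ℂ) +
              Polynomial.aeval (X 1 : MvPolynomial (Fin 2) ℂ) g} + mxy ^ i k)) =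
      ∑ k ∈ Finset.Icc 1 s, ∑ j ∈ Finset.Icc 1 k, i j := by
  have hi : MonotoneOn i (Set.Icc 1 s) :=
    (strictMonoOn_of_lt_succ Set.ordConnected_Icc fun k _ hk hk1 => by
      simp only [Order.succ_eq_add_one, Set.mem_Icc] at hk hk1
      exact hmono k hk.1 (by omega)).monotoneOn
  have e := Ideal.quotientEquivAlg (monomialTower i s) (tower g i s) (shear g)
    (map_shear_monomialTower hg0 i s).symm
  exact e.toLinearEquiv.finrank_eq.symm.trans (finrank_quotient_monomialTower hi)

/-- **Colength of a tower.** If `1 ≤ i₁ < ⋯ < i_s` and `g ∈ ℂ[y]` satisfies `g(0) = 0`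
and `deg g < i_s`, then the tower `K = ∏ₖ ((x + g(y)) + m^{iₖ})` has colength
`∑_{k=1}^s ∑_{j=1}^k i_j`. -/
theorem tower_colength (s : ℕ) (hs : 1 ≤ s) (i : ℕ → ℕ) (hi1 : 1 ≤ i 1)
    (hmono : ∀ k, 1 ≤ k → k < s → i k < i (k + 1))
    (g : Polynomial ℂ) (hg0 : g.eval 0 = 0) (hgdeg : g.natDegree < i s) :
    Module.finrank ℂ
      (MvPolynomial (Fin 2) ℂ ⧸
        ∏ k ∈ Finset.Icc 1 s,
          (Ideal.span {(X 0 : MvPolynomial (Fin 2) ℂ) +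
              Polynomial.aeval (X 1 : MvPolynomial (Fin 2) ℂ) g} + mxy ^ i k)) =
      ∑ k ∈ Finset.Icc 1 s, ∑ j ∈ Finset.Icc 1 k, i j :=
  tower_colength_general s i hmono g hg0
end

section
/- For every integer h ≥ 1, let I_h = ∏_{k=1}^h ((x) + m^k) · ∏_{k=1}^h ((y) + m^k) = ∏_{k=1}^h (x, y^k) · ∏_{k=1}^h (x^k, y) ⊆ ℂ[x,y] be the product of the two complete monomial towers of height h. Then dim_ℂ ℂ[x,y]/I_h = h(h+1)(h+2)/3 + h². -/
open MvPolynomial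

/-!
Write `T n = (n + 1).choose 2` for the triangular numbers. Since `(x) + m^k = (x, y^k)`, the
ideal identity `∏_{k=1}^h (I + J^k) = ∑_{n ≤ h} I^(h-n) J^(T n)` shows that each tower, and hence
`I_h`, is a monomial ideal: `I_h` is generated by the monomials `x^(h-n+T m) y^(T n+h-m)` with
`n, m ≤ h`. The colength of a monomial ideal is the number of monomials outside it, and `x^a y^b`
lies outside `I_h` exactly when `a < h` and `b < h + T (h - a)`, or symmetrically with `a` and `b`
exchanged. Each of these two strips has `h² + C(h+2, 3)` elements and they overlap in the
`h × h` square, so the colength is `h² + 2 C(h+2, 3)`.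
-/

open Finset

theorem Nat.choose_two_succ (n : ℕ) : (n + 1 + 1).choose 2 = (n + 1).choose 2 + (n + 1) := by
  rw [Nat.choose_succ_succ', Nat.choose_one_right, add_comm]

theorem Nat.choose_two_add_sub_le {x y : ℕ} (hxy : x ≤ y) :
    (x + 1).choose 2 + (y - x) ≤ (y + 1).choose 2 := by
  obtain ⟨d, rfl⟩ := Nat.exists_eq_add_of_le hxy
  induction d with
  | zero => simp
  | succ d ih =>
    have := ih (Nat.le_add_right x d)
    rw [← add_assoc, Nat.choose_two_succ]
    omega

theorem Nat.six_mul_choose_three (n : ℕ) : 6 * (n + 2).choose 3 = n * (n + 1) * (n + 2) := by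
  have h3 := Nat.add_one_mul_choose_eq (n + 1) 2
  have h2 := Nat.add_one_mul_choose_eq n 1
  rw [Nat.choose_one_right] at h2
  nlinarith

section Towers

variable {R : Type*} [CommSemiring R]

theorem Ideal.pow_sup_le_sup_pow (I J : Ideal R) (k : ℕ) : (I ⊔ J) ^ k ≤ I ⊔ J ^ k := by
  induction k with
  | zero => simp
  | succ k ih =>
    calc (I ⊔ J) ^ (k + 1) = (I ⊔ J) * (I ⊔ J) ^ k := by rw [pow_succ']
      _ ≤ (I ⊔ J) * (I ⊔ J ^ k) := by gcongr
      _ = I * (I ⊔ J ^ k) ⊔ (J * I ⊔ J ^ (k + 1)) := by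
        rw [Ideal.sup_mul, Ideal.mul_sup J, pow_succ']
      _ ≤ I ⊔ J ^ (k + 1) :=
        sup_le (Ideal.mul_le_left.trans le_sup_left) (sup_le_sup_right Ideal.mul_le_right _)

theorem Ideal.sup_sup_pow (I J : Ideal R) (k : ℕ) : I ⊔ (I ⊔ J) ^ k = I ⊔ J ^ k :=
  le_antisymm (sup_le le_sup_left (Ideal.pow_sup_le_sup_pow I J k))
    (sup_le_sup_left (Ideal.pow_right_mono le_sup_right k) I)

theorem Ideal.prod_Icc_sup_pow (I J : Ideal R) (h : ℕ) :
    ∏ k ∈ Icc 1 h, (I ⊔ J ^ k) = ⨆ n ≤ h, I ^ (h - n) * J ^ (n + 1).choose 2 := by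
  induction h with
  | zero => simp
  | succ h ih =>
    rw [prod_Icc_succ_top (by omega), ih]
    apply le_antisymm
    · simp_rw [Submodule.iSup_mul]
      refine iSup₂_le fun n hn => ?_
      rw [Ideal.mul_sup]
      refine sup_le (le_iSup₂_of_le n (by omega) (le_of_eq ?_))
        (le_iSup₂_of_le (n + 1) (by omega) ?_)
      · rw [show h + 1 - n = h - n + 1 by omega, pow_succ]
        ring
      -- `J ^ (h + 1) ≤ J ^ (n + 1)` and `T (n + 1) = T n + (n + 1)` put this term in summand `n + 1`
      · rw [show h + 1 - (n + 1) = h - n by omega, Nat.choose_two_succ]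
        calc _ ≤ I ^ (h - n) * J ^ (n + 1).choose 2 * J ^ (n + 1) :=
              Ideal.mul_mono_right (Ideal.pow_le_pow_right (by omega))
          _ = _ := by ring
    · refine iSup₂_le fun n hn => ?_
      rcases Nat.lt_or_ge n (h + 1) with hn' | hn'
      · calc I ^ (h + 1 - n) * J ^ (n + 1).choose 2
            = I ^ (h - n) * J ^ (n + 1).choose 2 * I := by
              rw [show h + 1 - n = h - n + 1 by omega, pow_succ]; ring
          _ ≤ _ := Ideal.mul_mono (le_iSup₂_of_le n (by omega) le_rfl) le_sup_left
      · obtain rfl : n = h + 1 := by omega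
        calc I ^ (h + 1 - (h + 1)) * J ^ (h + 1 + 1).choose 2
            = I ^ (h - h) * J ^ (h + 1).choose 2 * J ^ (h + 1) := by
              rw [Nat.choose_two_succ, Nat.sub_self, Nat.sub_self]; ring
          _ ≤ _ := Ideal.mul_mono (le_iSup₂_of_le (κ := (· ≤ h)) h le_rfl le_rfl) le_sup_right

theorem Ideal.span_image_eq_iSup {ι : Type*} (f : ι → R) (S : Set ι) :
    Ideal.span (f '' S) = ⨆ s ∈ S, Ideal.span {f s} := by
  simp_rw [Set.image_eq_iUnion, Ideal.span_iUnion]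

end Towers

namespace MvPolynomial

variable {σ K : Type*} [Field K]

theorem isCompl_span_monomial_restrictSupport (S : Set (σ →₀ ℕ)) :
    IsCompl ((Ideal.span ((monomial · (1 : K)) '' S)).restrictScalars K)
      (restrictSupport K {d | ∀ s ∈ S, ¬ s ≤ d}) := by
  constructor
  · rw [Submodule.disjoint_def]
    intro p hI hB
    rw [Submodule.restrictScalars_mem, mem_ideal_span_monomial_image] at hI
    rw [mem_restrictSupport_iff K] at hB
    rw [← support_eq_empty, Finset.eq_empty_iff_forall_notMem]
    intro d hd
    obtain ⟨s, hs, hsd⟩ := hI d hd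
    exact hB hd s hs hsd
  · rw [codisjoint_iff, eq_top_iff]
    rintro p -
    induction p using MvPolynomial.induction_on' with
    | monomial d c =>
      by_cases hd : ∃ s ∈ S, s ≤ d
      · refine Submodule.mem_sup_left ?_
        rw [Submodule.restrictScalars_mem, mem_ideal_span_monomial_image]
        intro e he
        rw [Finset.mem_singleton.mp (support_monomial_subset he)]
        exact hd
      · push Not at hd
        exact Submodule.mem_sup_right ((monomial_mem_restrictSupport K).mpr (Or.inl hd))
    | add p q hp hq => exact Submodule.add_mem _ hp hq

theorem finrank_quotient_span_monomial_s6 (S : Set (σ →₀ ℕ)) :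
    Module.finrank K (MvPolynomial σ K ⧸ Ideal.span ((monomial · (1 : K)) '' S)) =
      Nat.card {d : σ →₀ ℕ | ∀ s ∈ S, ¬ s ≤ d} := by
  rw [← (Submodule.Quotient.restrictScalarsEquiv K _).finrank_eq,
    (Submodule.quotientEquivOfIsCompl _ _ (isCompl_span_monomial_restrictSupport S)).finrank_eq,
    Module.finrank_eq_nat_card_basis (basisRestrictSupport K _)]

end MvPolynomial

/-- The exponent of `x^(h-n) y^(T n) · y^(h-m) x^(T m)`. -/
noncomputable def towerExponent (h n m : ℕ) : Fin 2 →₀ ℕ :=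
  Finsupp.single 0 (h - n + (m + 1).choose 2) + Finsupp.single 1 ((n + 1).choose 2 + (h - m))

theorem prod_towers_eq_span_monomial (h : ℕ) :
    (∏ k ∈ Icc 1 h, (Ideal.span {(X 0 : MvPolynomial (Fin 2) ℂ)} + mxy ^ k)) *
      (∏ k ∈ Icc 1 h, (Ideal.span {(X 1 : MvPolynomial (Fin 2) ℂ)} + mxy ^ k)) =
    Ideal.span ((monomial · 1) '' Set.image2 (towerExponent h) (Set.Iic h) (Set.Iic h)) := by
  have hx : mxy = Ideal.span {X 0} ⊔ Ideal.span {X 1} := Ideal.span_insert _ _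
  have hy : mxy = Ideal.span {X 1} ⊔ Ideal.span {X 0} := hx.trans (sup_comm _ _)
  have tower_x (k : ℕ) : Ideal.span {X 0} + mxy ^ k = Ideal.span {X 0} ⊔ Ideal.span {X 1} ^ k := by
    rw [Submodule.add_eq_sup, hx, Ideal.sup_sup_pow]
  have tower_y (k : ℕ) : Ideal.span {X 1} + mxy ^ k = Ideal.span {X 1} ⊔ Ideal.span {X 0} ^ k := by
    rw [Submodule.add_eq_sup, hy, Ideal.sup_sup_pow]
  simp only [tower_x, tower_y, Ideal.prod_Icc_sup_pow, Submodule.iSup_mul]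
  simp only [Submodule.mul_iSup, Ideal.span_image_eq_iSup, iSup_image2, Set.mem_Iic]
  refine iSup_congr fun n => iSup_congr fun _ => iSup_congr fun m => iSup_congr fun _ => ?_
  simp only [Ideal.span_singleton_pow, Ideal.span_singleton_mul_span_singleton, X_pow_eq_monomial,
    monomial_mul, towerExponent, Finsupp.single_add, mul_one]
  congr 4
  abel

theorem forall_not_tower_exponent_le_iff (h a b : ℕ) :
    (∀ n ≤ h, ∀ m ≤ h, ¬(h - n + (m + 1).choose 2 ≤ a ∧ (n + 1).choose 2 + (h - m) ≤ b)) ↔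
      (a < h ∧ b < h + (h - a + 1).choose 2) ∨ (b < h ∧ a < h + (h - b + 1).choose 2) := by
  have le_choose_two (m : ℕ) : m ≤ (m + 1).choose 2 := by
    simpa using Nat.choose_two_add_sub_le (Nat.zero_le m)
  constructor
  · intro H
    by_contra! hcov
    have choose_zero : (0 + 1).choose 2 = 0 := rfl
    rcases lt_or_ge a h with ha | ha
    · have := hcov.1 ha
      exact H (h - a) (Nat.sub_le h a) 0 (Nat.zero_le h) (by omega)
    rcases lt_or_ge b h with hb | hb
    · have := hcov.2 hb
      exact H 0 (Nat.zero_le h) (h - b) (Nat.sub_le h b) (by omega)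
    · exact H 0 (Nat.zero_le h) 0 (Nat.zero_le h) (by omega)
  · rintro H n hn m hm ⟨ha, hb⟩
    have hn_le := le_choose_two n
    have hm_le := le_choose_two m
    rcases H with ⟨ha', hb'⟩ | ⟨hb', ha'⟩
    · have := Nat.choose_two_add_sub_le (show h - a ≤ n by omega)
      omega
    · have := Nat.choose_two_add_sub_le (show h - b ≤ m by omega)
      omega

def columnStrip (h : ℕ) : Finset (ℕ × ℕ) :=
  ((range h).sigma fun a => range (h + (h - a + 1).choose 2)).map
    (Equiv.sigmaEquivProd ℕ ℕ).toEmbedding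

theorem mem_columnStrip {h : ℕ} {p : ℕ × ℕ} :
    p ∈ columnStrip h ↔ p.1 < h ∧ p.2 < h + (h - p.1 + 1).choose 2 := by
  simp [columnStrip]

theorem sum_range_sub_add_one_choose_two (h : ℕ) :
    ∑ a ∈ range h, (h - a + 1).choose 2 = (h + 2).choose 3 := by
  rw [← sum_range_reflect]
  calc ∑ j ∈ range h, (h - (h - 1 - j) + 1).choose 2 = ∑ j ∈ range h, (j + 2).choose 2 :=
        sum_congr rfl fun j hj => by rw [mem_range] at hj; congr 1; omega
    _ = (h + 2).choose 3 := by
      induction h with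
      | zero => rfl
      | succ h ih => rw [sum_range_succ, ih, add_comm, ← Nat.choose_succ_succ']

theorem card_columnStrip (h : ℕ) : #(columnStrip h) = h * h + (h + 2).choose 3 := by
  simp [columnStrip, sum_add_distrib, sum_range_sub_add_one_choose_two]

theorem card_columnStrip_union_swap (h : ℕ) :
    #(columnStrip h ∪ (columnStrip h).map (Equiv.prodComm ℕ ℕ).toEmbedding) =
      h ^ 2 + 2 * (h + 2).choose 3 := by
  have hinter : columnStrip h ∩ (columnStrip h).map (Equiv.prodComm ℕ ℕ).toEmbedding =
      range h ×ˢ range h := by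
    ext ⟨a, b⟩
    simp only [mem_inter, mem_map_equiv, mem_columnStrip, mem_product, mem_range,
      Equiv.prodComm_symm, Equiv.prodComm_apply, Prod.swap_prod_mk]
    omega
  have := card_union_add_card_inter (columnStrip h)
    ((columnStrip h).map (Equiv.prodComm ℕ ℕ).toEmbedding)
  rw [hinter, card_map, card_product, card_range, card_columnStrip] at this
  rw [sq]
  omega

theorem Finsupp.single_zero_add_single_one_le_iff {p q : ℕ} {d : Fin 2 →₀ ℕ} :
    Finsupp.single 0 p + Finsupp.single 1 q ≤ d ↔ p ≤ d 0 ∧ q ≤ d 1 := by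
  simp [Finsupp.le_def, Fin.forall_fin_two]

theorem card_not_le_towerExponent (h : ℕ) :
    Nat.card {d : Fin 2 →₀ ℕ | ∀ s ∈ Set.image2 (towerExponent h) (Set.Iic h) (Set.Iic h),
      ¬ s ≤ d} = h ^ 2 + 2 * (h + 2).choose 3 := by
  rw [← card_columnStrip_union_swap, ← Nat.card_eq_finsetCard]
  refine Nat.card_congr ((Finsupp.equivFunOnFinite.trans (finTwoArrowEquiv ℕ)).subtypeEquiv
    fun d => ?_)
  simp only [Set.mem_ofPred_eq, Set.forall_mem_image2, Set.mem_Iic, towerExponent,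
    Finsupp.single_zero_add_single_one_le_iff, forall_not_tower_exponent_le_iff]
  simp [mem_columnStrip]

theorem colength_product_complete_monomial_towers_general (h : ℕ) :
    Module.finrank ℂ
      (MvPolynomial (Fin 2) ℂ ⧸
        ((∏ k ∈ Finset.Icc 1 h, (Ideal.span {(X 0 : MvPolynomial (Fin 2) ℂ)} + mxy ^ k)) *
         (∏ k ∈ Finset.Icc 1 h, (Ideal.span {(X 1 : MvPolynomial (Fin 2) ℂ)} + mxy ^ k)))) =
      h * (h + 1) * (h + 2) / 3 + h ^ 2 := by
  rw [prod_towers_eq_span_monomial, finrank_quotient_span_monomial_s6, card_not_le_towerExponent]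
  have := Nat.six_mul_choose_three h
  omega

/-- **Colength of the product of the two complete monomial towers of height `h`.**
For `I_h = ∏_{k=1}^h ((x) + m^k) · ∏_{k=1}^h ((y) + m^k)` one has
`dim_ℂ ℂ[x,y]/I_h = h(h+1)(h+2)/3 + h²`. -/
theorem colength_product_complete_monomial_towers (h : ℕ) (hh : 1 ≤ h) :
    Module.finrank ℂ
      (MvPolynomial (Fin 2) ℂ ⧸
        ((∏ k ∈ Finset.Icc 1 h, (Ideal.span {(X 0 : MvPolynomial (Fin 2) ℂ)} + mxy ^ k)) *
         (∏ k ∈ Finset.Icc 1 h, (Ideal.span {(X 1 : MvPolynomial (Fin 2) ℂ)} + mxy ^ k)))) =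
      h * (h + 1) * (h + 2) / 3 + h ^ 2 :=
  colength_product_complete_monomial_towers_general h
end

section
/- Let s ≥ 1 and let 1 ≤ i_1 < i_2 < ⋯ < i_s be a strictly increasing sequence of positive integers. Then the monomial tower factors as follows: ∏_{k=1}^s (x, y^{i_k}) = ( x^{s−j} · y^{i_1 + i_2 + ⋯ + i_j} : j = 0, 1, …, s ), i.e. the product ideal equals the ideal generated by the s+1 monomials x^s, x^{s−1} y^{i_1}, x^{s−2} y^{i_1+i_2}, …, x y^{i_1+⋯+i_{s−1}}, y^{i_1+⋯+i_s}. -/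
open MvPolynomial Pointwise

private lemma tower_ge (s : ℕ) (i : ℕ → ℕ) :
    Ideal.span ((fun j : ℕ => (X 0 : MvPolynomial (Fin 2) ℂ) ^ (s - j) *
        X 1 ^ (∑ k ∈ Finset.Icc 1 j, i k)) '' Set.Iic s) ≤
      ∏ k ∈ Finset.Icc 1 s, Ideal.span {(X 0 : MvPolynomial (Fin 2) ℂ), X 1 ^ i k} := by
  rw [Ideal.span_le]
  rintro p ⟨j, hj, rfl⟩
  simp only [Set.mem_Iic] at hj
  rw [SetLike.mem_coe]
  show (X 0 : MvPolynomial (Fin 2) ℂ) ^ (s - j) * X 1 ^ (∑ k ∈ Finset.Icc 1 j, i k) ∈ _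
  have key : (X 0 : MvPolynomial (Fin 2) ℂ) ^ (s - j) *
      X 1 ^ (∑ k ∈ Finset.Icc 1 j, i k) =
      ∏ k ∈ Finset.Icc 1 s, (if k ≤ j then (X 1 : MvPolynomial (Fin 2) ℂ) ^ i k else X 0) := by
    rw [Finset.prod_ite]
    have h1 : (Finset.Icc 1 s).filter (fun k => k ≤ j) = Finset.Icc 1 j := by
      ext k; simp only [Finset.mem_filter, Finset.mem_Icc]; omega
    have h2 : (Finset.Icc 1 s).filter (fun k => ¬ k ≤ j) = Finset.Icc (j+1) s := by
      ext k; simp only [Finset.mem_filter, Finset.mem_Icc]; omega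
    rw [h1, h2, Finset.prod_pow_eq_pow_sum, Finset.prod_const, Nat.card_Icc, mul_comm]
    congr 2
    omega
  rw [key]
  apply Ideal.prod_mem_prod
  intro k _
  split
  · exact Ideal.subset_span (Set.mem_insert_iff.mpr (Or.inr rfl))
  · exact Ideal.subset_span (Set.mem_insert _ _)

private lemma tower_le (i : ℕ → ℕ) : ∀ s : ℕ,
    (∀ k l, 1 ≤ k → k ≤ l → l ≤ s → i k ≤ i l) →
    (∏ k ∈ Finset.Icc 1 s,
        Ideal.span {(X 0 : MvPolynomial (Fin 2) ℂ), X 1 ^ i k}) ≤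
      Ideal.span
        ((fun j : ℕ => (X 0 : MvPolynomial (Fin 2) ℂ) ^ (s - j) *
            X 1 ^ (∑ k ∈ Finset.Icc 1 j, i k)) '' Set.Iic s) := by
  intro s
  induction s with
  | zero =>
    intro _
    have h1 : (1 : MvPolynomial (Fin 2) ℂ) ∈ Ideal.span
        ((fun j : ℕ => (X 0 : MvPolynomial (Fin 2) ℂ) ^ (0 - j) *
            X 1 ^ (∑ k ∈ Finset.Icc 1 j, i k)) '' Set.Iic 0) := by
      apply Ideal.subset_span
      exact ⟨0, by simp, by simp⟩
    rw [show Finset.Icc 1 0 = ∅ from rfl, Finset.prod_empty, Ideal.one_eq_top]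
    exact le_of_eq ((Ideal.eq_top_iff_one _).mpr h1).symm
  | succ s ih =>
    intro hmono
    have hstep := ih (fun k l hk hkl hls => hmono k l hk hkl (hls.trans (Nat.le_succ s)))
    calc (∏ k ∈ Finset.Icc 1 (s+1),
        Ideal.span {(X 0 : MvPolynomial (Fin 2) ℂ), X 1 ^ i k})
        = (∏ k ∈ Finset.Icc 1 s,
            Ideal.span {(X 0 : MvPolynomial (Fin 2) ℂ), X 1 ^ i k}) *
            Ideal.span {(X 0 : MvPolynomial (Fin 2) ℂ), X 1 ^ i (s+1)} :=
          Finset.prod_Icc_succ_top (Nat.le_add_left 1 s) _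
      _ ≤ Ideal.span
            ((fun j : ℕ => (X 0 : MvPolynomial (Fin 2) ℂ) ^ (s - j) *
                X 1 ^ (∑ k ∈ Finset.Icc 1 j, i k)) '' Set.Iic s) *
            Ideal.span {(X 0 : MvPolynomial (Fin 2) ℂ), X 1 ^ i (s+1)} :=
          Ideal.mul_mono_left hstep
      _ = Ideal.span
            (((fun j : ℕ => (X 0 : MvPolynomial (Fin 2) ℂ) ^ (s - j) *
                X 1 ^ (∑ k ∈ Finset.Icc 1 j, i k)) '' Set.Iic s) *
             {(X 0 : MvPolynomial (Fin 2) ℂ), X 1 ^ i (s+1)}) := Ideal.span_mul_span' _ _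
      _ ≤ _ := by
          rw [Ideal.span_le]
          rintro p hp
          obtain ⟨a, ha, b, hb, rfl⟩ := Set.mem_mul.mp hp
          obtain ⟨j, hj, rfl⟩ := ha
          simp only [Set.mem_Iic] at hj
          rw [SetLike.mem_coe]
          rcases hb with rfl | rfl
          · -- b = X 0
            apply Ideal.subset_span
            refine ⟨j, Set.mem_Iic.mpr (hj.trans (Nat.le_succ s)), ?_⟩
            show (X 0 : MvPolynomial (Fin 2) ℂ) ^ (s + 1 - j) *
                X 1 ^ (∑ k ∈ Finset.Icc 1 j, i k) =
              (X 0 : MvPolynomial (Fin 2) ℂ) ^ (s - j) *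
                X 1 ^ (∑ k ∈ Finset.Icc 1 j, i k) * X 0
            have h : s + 1 - j = (s - j) + 1 := by omega
            rw [h, pow_succ]
            ring
          · -- b = X 1 ^ i (s+1)
            have hle : i (j+1) ≤ i (s+1) :=
              hmono (j+1) (s+1) (Nat.succ_le_succ (Nat.zero_le j))
                (Nat.succ_le_succ hj) le_rfl
            have hsum : (∑ k ∈ Finset.Icc 1 (j+1), i k) =
                (∑ k ∈ Finset.Icc 1 j, i k) + i (j+1) :=
              Finset.sum_Icc_succ_top (Nat.le_add_left 1 j) _
            have heq : (X 0 : MvPolynomial (Fin 2) ℂ) ^ (s - j) *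
                X 1 ^ (∑ k ∈ Finset.Icc 1 j, i k) * X 1 ^ i (s+1) =
                ((X 0 : MvPolynomial (Fin 2) ℂ) ^ (s + 1 - (j+1)) *
                  X 1 ^ (∑ k ∈ Finset.Icc 1 (j+1), i k)) *
                X 1 ^ (i (s+1) - i (j+1)) := by
              rw [mul_assoc, mul_assoc, ← pow_add, ← pow_add]
              congr 2
              · omega
              · omega
            show (X 0 : MvPolynomial (Fin 2) ℂ) ^ (s - j) *
                X 1 ^ (∑ k ∈ Finset.Icc 1 j, i k) * X 1 ^ i (s+1) ∈ _
            rw [heq]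
            exact Ideal.mul_mem_right _ _ (Ideal.subset_span
              ⟨j+1, Set.mem_Iic.mpr (Nat.succ_le_succ hj), rfl⟩)

/-- **Generators of a monomial tower.** For a strictly increasing sequence
`1 ≤ i₁ < ⋯ < i_s` of positive integers one has
`∏_{k=1}^s (x, y^{iₖ}) = (x^{s−j} y^{i₁+⋯+i_j} : 0 ≤ j ≤ s)` in `ℂ[x,y]`. -/
theorem monomial_tower_generators (s : ℕ) (hs : 1 ≤ s) (i : ℕ → ℕ) (hi1 : 1 ≤ i 1)
    (hmono : ∀ k, 1 ≤ k → k < s → i k < i (k + 1)) :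
    (∏ k ∈ Finset.Icc 1 s,
        Ideal.span {(X 0 : MvPolynomial (Fin 2) ℂ), X 1 ^ i k}) =
      Ideal.span
        ((fun j : ℕ => (X 0 : MvPolynomial (Fin 2) ℂ) ^ (s - j) *
            X 1 ^ (∑ k ∈ Finset.Icc 1 j, i k)) '' Set.Iic s) := by
  have hmono' : ∀ k l, 1 ≤ k → k ≤ l → l ≤ s → i k ≤ i l := by
    intro k l hk hkl hls
    induction l with
    | zero => omega
    | succ m ihm =>
      rcases Nat.lt_or_ge k (m+1) with h | h
      · have hkm : i k ≤ i m := ihm (by omega) (by omega)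
        have : i m < i (m+1) := hmono m (by omega) (by omega)
        omega
      · have : k = m + 1 := by omega
        rw [this]
  exact le_antisymm (tower_le i s hmono') (tower_ge s i)
end

section
/- For every integer h ≥ 1, let I_h = ∏_{k=1}^h (x, y^k) · ∏_{k=1}^h (x^k, y) ⊆ ℂ[x,y]. Then I_h is generated by the 2h+1 monomials x^{h−i} y^{h + i(i+1)/2} and x^{h + i(i+1)/2} y^{h−i} for 0 ≤ i ≤ h; that is, I_h = ( x^{h−i} y^{h + C(i+1,2)}, x^{h + C(i+1,2)} y^{h−i} : 0 ≤ i ≤ h ), where C(i+1,2) = i(i+1)/2 is a binomial coefficient. -/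
open MvPolynomial

namespace TowerAux

abbrev R := MvPolynomial (Fin 2) ℂ

/-- Triangular numbers. -/
def T (i : ℕ) : ℕ := (i + 1).choose 2

lemma T_zero : T 0 = 0 := rfl

lemma T_succ (i : ℕ) : T (i + 1) = T i + (i + 1) := by
  show (i + 1 + 1).choose 2 = _
  rw [Nat.choose_succ_succ (i + 1) 1, Nat.choose_one_right, T, Nat.add_comm]

lemma T_add_le (j d : ℕ) : j + T d ≤ T (d + j) := by
  induction j with
  | zero => simp
  | succ j ih =>
    have h1 : d + (j + 1) = (d + j) + 1 := by ring
    rw [h1, T_succ]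
    omega

lemma le_T (j : ℕ) : j ≤ T j := by simpa [T_zero] using T_add_le j 0

lemma T_sub_le {i j : ℕ} (h : j ≤ i) : j + T (i - j) ≤ T i := by
  have := T_add_le j (i - j)
  rwa [show i - j + j = i by omega] at this

/-- Monomial multiple membership. -/
lemma mono_mem {S : Set R} {u v : R} {a b c d : ℕ} (hc : c ≤ a) (hd : d ≤ b)
    (hg : u ^ c * v ^ d ∈ S) : u ^ a * v ^ b ∈ Ideal.span S := by
  have e : u ^ a * v ^ b = (u ^ (a - c) * v ^ (b - d)) * (u ^ c * v ^ d) := by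
    rw [mul_mul_mul_comm, ← pow_add, ← pow_add, Nat.sub_add_cancel hc, Nat.sub_add_cancel hd]
  rw [e]
  exact Ideal.mul_mem_left _ _ (Ideal.subset_span hg)

lemma pow_le (u v : R) (k : ℕ) : (Ideal.span {u, v}) ^ (k + 1) ≤ Ideal.span {u, v ^ (k + 1)} := by
  induction k with
  | zero => simp
  | succ n ih =>
    rw [pow_succ]
    calc Ideal.span {u, v} ^ (n + 1) * Ideal.span {u, v}
        ≤ Ideal.span {u, v ^ (n + 1)} * Ideal.span {u, v} := Ideal.mul_mono_left ih
      _ ≤ Ideal.span {u, v ^ (n + 2)} := by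
          rw [Ideal.span_mul_span']
          apply Ideal.span_le.2
          rintro f ⟨a, ha, b, hb, rfl⟩
          beta_reduce
          rcases ha with rfl | rfl
          · exact Ideal.mul_mem_right _ _ (Ideal.subset_span (Set.mem_insert _ _))
          · rcases hb with rfl | rfl
            · exact Ideal.mul_mem_left _ _ (Ideal.subset_span (Set.mem_insert _ _))
            · rw [← pow_succ]
              exact Ideal.subset_span (Set.mem_insert_of_mem _ rfl)

lemma factor_eq (u v : R) (huv : mxy = Ideal.span {u, v}) (k : ℕ) (hk : 1 ≤ k) :
    Ideal.span {u} + mxy ^ k = Ideal.span {u, v ^ k} := by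
  obtain ⟨n, rfl⟩ : ∃ n, k = n + 1 := ⟨k - 1, by omega⟩
  rw [huv]
  apply le_antisymm
  · apply sup_le
    · exact Ideal.span_mono (Set.singleton_subset_iff.2 (Set.mem_insert _ _))
    · exact pow_le u v n
  · rw [Ideal.add_eq_sup]
    apply Ideal.span_le.2
    rintro f hf
    rcases hf with hf | hf
    · exact Ideal.mem_sup_left (Ideal.subset_span hf)
    · rw [hf]
      have hv : v ∈ Ideal.span {u, v} := Ideal.subset_span (Set.mem_insert_of_mem _ rfl)
      exact Ideal.mem_sup_right (Ideal.pow_mem_pow hv (n + 1))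

lemma tower (u v : R) (huv : mxy = Ideal.span {u, v}) (h : ℕ) :
    (∏ k ∈ Finset.Icc 1 h, (Ideal.span {u} + mxy ^ k)) =
      Ideal.span {f | ∃ i ≤ h, f = u ^ (h - i) * v ^ T i} := by
  induction h with
  | zero =>
    rw [show Finset.Icc 1 0 = ∅ from Finset.Icc_eq_empty (by omega), Finset.prod_empty,
      Ideal.one_eq_top]
    symm
    rw [Ideal.eq_top_iff_one]
    exact Ideal.subset_span ⟨0, le_refl 0, by simp [T_zero]⟩
  | succ n ih =>
    rw [Finset.prod_Icc_succ_top (by omega), ih, factor_eq u v huv (n + 1) (by omega),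
      Ideal.span_mul_span']
    apply le_antisymm
    · apply Ideal.span_le.2
      rintro f ⟨a, ⟨i, hi, rfl⟩, b, hb, rfl⟩
      beta_reduce
      rcases hb with hb | hb <;> rw [hb]
      · have e : u ^ (n - i) * v ^ T i * u = u ^ ((n + 1) - i) * v ^ T i := by
          rw [show (n + 1) - i = (n - i) + 1 by omega, pow_succ]; ring
        rw [e]
        exact Ideal.subset_span ⟨i, by omega, rfl⟩
      · have e : u ^ (n - i) * v ^ T i * v ^ (n + 1) = u ^ (n - i) * v ^ (T i + (n + 1)) := by
          rw [mul_assoc, ← pow_add]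
        rw [e]
        have hg : u ^ ((n + 1) - (i + 1)) * v ^ T (i + 1) ∈
            {f | ∃ i ≤ n + 1, f = u ^ ((n + 1) - i) * v ^ T i} := ⟨i + 1, by omega, rfl⟩
        rw [show (n + 1) - (i + 1) = n - i by omega] at hg
        apply mono_mem (le_refl _) ?_ hg
        rw [T_succ]; omega
    · apply Ideal.span_le.2
      rintro f ⟨i, hi, rfl⟩
      rcases Nat.lt_or_ge i (n + 1) with hlt | hge
      · refine Ideal.subset_span ⟨u ^ (n - i) * v ^ T i, ⟨i, by omega, rfl⟩, u, Or.inl rfl, ?_⟩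
        rw [show (n + 1) - i = (n - i) + 1 by omega, pow_succ]; ring
      · have hi' : i = n + 1 := by omega
        subst hi'
        refine Ideal.subset_span ⟨u ^ (n - n) * v ^ T n, ⟨n, le_refl n, rfl⟩, v ^ (n + 1),
          Set.mem_insert_of_mem _ rfl, ?_⟩
        beta_reduce
        rw [show (n + 1) - (n + 1) = n - n by omega, T_succ, mul_assoc, ← pow_add]

end TowerAux

open TowerAux in
/-- **Generators of `I_h`.** For `h ≥ 1`, the product `I_h = ∏_{k=1}^h (x,y^k) · ∏_{k=1}^h (x^k,y)`
of the two complete monomial towers of height `h` is generated by the `2h+1` monomials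
`x^{h−i} y^{h+C(i+1,2)}` and `x^{h+C(i+1,2)} y^{h−i}` for `0 ≤ i ≤ h`. -/
theorem product_complete_monomial_towers_generators (h : ℕ) (hh : 1 ≤ h) :
    ((∏ k ∈ Finset.Icc 1 h, (Ideal.span {(X 0 : MvPolynomial (Fin 2) ℂ)} + mxy ^ k)) *
     (∏ k ∈ Finset.Icc 1 h, (Ideal.span {(X 1 : MvPolynomial (Fin 2) ℂ)} + mxy ^ k))) =
      Ideal.span {f : MvPolynomial (Fin 2) ℂ | ∃ i ≤ h,
        f = X 0 ^ (h - i) * X 1 ^ (h + (i + 1).choose 2) ∨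
        f = X 0 ^ (h + (i + 1).choose 2) * X 1 ^ (h - i)} := by
  have hm2 : mxy = Ideal.span {X 1, X 0} := by unfold mxy; exact Ideal.span_pair_comm
  rw [tower (X 0) (X 1) rfl h, tower (X 1) (X 0) hm2 h, Ideal.span_mul_span']
  have hTset : ∀ i : ℕ, (i + 1).choose 2 = T i := fun _ => rfl
  apply le_antisymm
  · apply Ideal.span_le.2
    rintro f ⟨a, ⟨i, hi, rfl⟩, b, ⟨j, hj, rfl⟩, rfl⟩
    beta_reduce
    have e : (X 0 : R) ^ (h - i) * X 1 ^ T i * (X 1 ^ (h - j) * X 0 ^ T j) =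
        X 0 ^ ((h - i) + T j) * X 1 ^ ((h - j) + T i) := by
      rw [pow_add, pow_add]; ring
    rw [e]
    have hjT := le_T j
    have hiT := le_T i
    rcases le_total j i with hji | hij
    · have key := T_sub_le hji
      apply mono_mem (c := h - (i - j)) (d := h + T (i - j)) (by omega) (by omega)
      exact ⟨i - j, by omega, Or.inl (by rw [hTset])⟩
    · have key := T_sub_le hij
      apply mono_mem (c := h + T (j - i)) (d := h - (j - i)) (by omega) (by omega)
      exact ⟨j - i, by omega, Or.inr (by rw [hTset])⟩
  · apply Ideal.span_le.2
    rintro f ⟨i, hi, rfl | rfl⟩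
    · refine Ideal.subset_span ⟨X 0 ^ (h - i) * X 1 ^ T i, ⟨i, hi, rfl⟩,
        X 1 ^ (h - 0) * X 0 ^ T 0, ⟨0, Nat.zero_le _, rfl⟩, ?_⟩
      beta_reduce
      rw [hTset, T_zero, Nat.sub_zero, pow_zero, mul_one, mul_assoc, ← pow_add, Nat.add_comm]
    · refine Ideal.subset_span ⟨X 0 ^ (h - 0) * X 1 ^ T 0, ⟨0, Nat.zero_le _, rfl⟩,
        X 1 ^ (h - i) * X 0 ^ T i, ⟨i, hi, rfl⟩, ?_⟩
      beta_reduce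
      rw [hTset, T_zero, Nat.sub_zero, pow_zero, mul_one, pow_add]; ring
end

section
/- Let s ≥ 1, let 1 < i_1 < i_2 < ⋯ < i_s be a strictly increasing sequence of integers all greater than 1, let K = ∏_{k=1}^s (x, y^{i_k}) ⊆ ℂ[x,y], and let n ≥ 1 be a positive integer. Then dim_ℂ ℂ[x,y]/(K · m^n) = dim_ℂ ℂ[x,y]/K + (n(n+1) + 2ns)/2. -/
open MvPolynomial

/-!
Write `staircaseIdeal h` for the monomial ideal of `R[x,y]` generated by the `x^a y^(h a)`.
When `h` is antitone its standard monomials are the `x^a y^b` with `b < h a`, so its colength is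
`∑ₐ h a`; and the product of two such ideals is again one, whose height function is the infimal
convolution `a ↦ min_{b + c ≤ a} (h b + g c)` of the two. The tower `K` has heights
`i₁ + ⋯ + i_(s-a)` and `m^n` has heights `n - a`. Since the heights of `K` drop by at least one
at every step (all `i_k ≥ 1`), the infimal convolution is `i₁ + ⋯ + i_(s-a) + n` for `a ≤ s` and
`n - (a - s)` for `a ≥ s`, which adds `s n + n (n + 1) / 2` to the colength.
-/

open Finset

theorem finrank_quotient_span_monomial_image {σ R : Type*} [CommRing R] [Nontrivial R]
    (S : Set (σ →₀ ℕ)) :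
    Module.finrank R (MvPolynomial σ R ⧸ Ideal.span ((fun s => monomial s (1 : R)) '' S)) =
      Nat.card ↥(upperClosure S : Set (σ →₀ ℕ))ᶜ := by
  set I := Ideal.span ((fun s => monomial s (1 : R)) '' S)
  set D : Set (σ →₀ ℕ) := ↑(upperClosure S)
  have hI : I.restrictScalars R = restrictSupport R D := by
    ext p
    simp [I, D, mem_ideal_span_monomial_image, mem_restrictSupport_iff, Set.subset_def]
  have hD : IsCompl (restrictSupport R D) (restrictSupport R Dᶜ) :=
    (Submodule.orderIsoMapComap (AddMonoidAlgebra.coeffLinearEquiv R)).symm.isCompl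
      ⟨Finsupp.disjoint_supported_supported isCompl_compl.disjoint,
        Finsupp.codisjoint_supported_supported isCompl_compl.codisjoint⟩
  calc Module.finrank R (MvPolynomial σ R ⧸ I)
      = Module.finrank R (MvPolynomial σ R ⧸ I.restrictScalars R) :=
        (Submodule.Quotient.restrictScalarsEquiv R I).symm.finrank_eq
    _ = Module.finrank R (restrictSupport R Dᶜ) := by
        rw [hI]
        exact (Submodule.quotientEquivOfIsCompl _ _ hD).finrank_eq
    _ = Nat.card ↥Dᶜ := Module.finrank_eq_nat_card_basis (basisRestrictSupport R _)

lemma natCard_snd_lt_eq_sum_range {f : ℕ → ℕ} (hf : Antitone f) {N : ℕ} (hN : f N = 0) :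
    Nat.card {p : ℕ × ℕ // p.2 < f p.1} = ∑ a ∈ range N, f a := by
  have hlt : ∀ a b, b < f a → a < N := fun a b hb =>
    lt_of_not_ge fun ha => by have := hf ha; omega
  calc Nat.card {p : ℕ × ℕ // p.2 < f p.1}
      = Nat.card {x // x ∈ (range N).sigma fun a => range (f a)} :=
        Nat.card_congr <| (Equiv.sigmaEquivProd ℕ ℕ).symm.subtypeEquiv fun p => by
          simpa using fun hp => hlt _ _ hp
    _ = ∑ a ∈ range N, f a := by
        rw [Nat.card_eq_finsetCard, card_sigma]
        simp

section Staircase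

variable (R : Type*) [CommSemiring R]

noncomputable def staircaseIdeal (h : ℕ → ℕ) : Ideal (MvPolynomial (Fin 2) R) :=
  Ideal.span (Set.range fun a => X 0 ^ a * X 1 ^ h a)

variable {R}

lemma X_pow_mul_X_pow_mem_staircaseIdeal {h : ℕ → ℕ} {a a' b : ℕ} (ha : a' ≤ a)
    (hb : h a' ≤ b) : X 0 ^ a * X 1 ^ b ∈ staircaseIdeal R h :=
  Ideal.mem_of_dvd _ (mul_dvd_mul (pow_dvd_pow _ ha) (pow_dvd_pow _ hb))
    (Ideal.subset_span ⟨a', rfl⟩)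

lemma staircaseIdeal_eq_top {h : ℕ → ℕ} (h0 : h 0 = 0) : staircaseIdeal R h = ⊤ :=
  Ideal.eq_top_of_isUnit_mem _
    (by simpa using X_pow_mul_X_pow_mem_staircaseIdeal (R := R) (le_refl 0) h0.le) isUnit_one

lemma staircaseIdeal_mul {f g h : ℕ → ℕ} (hle : ∀ b c, f (b + c) ≤ h b + g c)
    (hex : ∀ a, ∃ b c, b + c ≤ a ∧ h b + g c ≤ f a) :
    staircaseIdeal R h * staircaseIdeal R g = staircaseIdeal R f := by
  have hprod : ∀ b c, (X 0 ^ b * X 1 ^ h b * (X 0 ^ c * X 1 ^ g c) : MvPolynomial (Fin 2) R) =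
      X 0 ^ (b + c) * X 1 ^ (h b + g c) := fun b c => by ring
  unfold staircaseIdeal
  rw [Ideal.span_mul_span']
  apply le_antisymm <;> rw [Ideal.span_le]
  · rintro _ ⟨_, ⟨b, rfl⟩, _, ⟨c, rfl⟩, rfl⟩
    dsimp only
    rw [hprod]
    exact X_pow_mul_X_pow_mem_staircaseIdeal le_rfl (hle b c)
  · rintro _ ⟨a, rfl⟩
    obtain ⟨b, c, hbc, hbcf⟩ := hex a
    refine Ideal.mem_of_dvd _ ?_ (Ideal.subset_span ⟨_, ⟨b, rfl⟩, _, ⟨c, rfl⟩, rfl⟩)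
    dsimp only
    rw [hprod]
    exact mul_dvd_mul (pow_dvd_pow _ hbc) (pow_dvd_pow _ hbcf)

lemma span_X_X_pow_eq_staircaseIdeal_ite (c : ℕ) :
    Ideal.span {X 0, X 1 ^ c} = staircaseIdeal R (fun a => if a = 0 then c else 0) := by
  apply le_antisymm
  · rw [Ideal.span_le, Set.insert_subset_iff, Set.singleton_subset_iff]
    constructor
    · simpa using X_pow_mul_X_pow_mem_staircaseIdeal (R := R) (a := 1) (b := 0) le_rfl
        (h := fun a => if a = 0 then c else 0) (by simp)
    · simpa using X_pow_mul_X_pow_mem_staircaseIdeal (R := R) (a := 0) (b := c) le_rfl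
        (h := fun a => if a = 0 then c else 0) (by simp)
  · rw [staircaseIdeal, Ideal.span_le]
    rintro _ ⟨_ | a, rfl⟩
    · simpa using Ideal.subset_span (by simp)
    · simpa [pow_succ] using Ideal.mul_mem_left _ (X 0 ^ a) (Ideal.subset_span (by simp))

lemma span_X_X_pow_eq_staircaseIdeal_tsub (n : ℕ) :
    Ideal.span {X 0, X 1} ^ n = staircaseIdeal R (n - ·) := by
  induction n with
  | zero => rw [pow_zero, Ideal.one_eq_top, staircaseIdeal_eq_top rfl]
  | succ n ih =>
    rw [pow_succ, ih, ← pow_one (X 1), span_X_X_pow_eq_staircaseIdeal_ite]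
    refine staircaseIdeal_mul (fun b c => ?_) (fun a => ?_)
    · split_ifs <;> omega
    · rcases a with _ | a
      · exact ⟨0, 0, le_rfl, by simp⟩
      · exact ⟨a, 1, le_rfl, by simp⟩

end Staircase

theorem finrank_quotient_staircaseIdeal {R : Type*} [CommRing R] [Nontrivial R] {f : ℕ → ℕ}
    (hf : Antitone f) {N : ℕ} (hN : f N = 0) :
    Module.finrank R (MvPolynomial (Fin 2) R ⧸ staircaseIdeal R f) = ∑ a ∈ range N, f a := by
  set S := Set.range fun a => Finsupp.single 0 a + Finsupp.single (1 : Fin 2) (f a)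
  have hI : staircaseIdeal R f = Ideal.span ((fun s => monomial s (1 : R)) '' S) := by
    rw [staircaseIdeal, ← Set.range_comp]
    congr 1
    ext a
    simp [X_pow_eq_monomial, monomial_mul]
  have hS : ∀ t : Fin 2 →₀ ℕ, t ∈ upperClosure S ↔ f (t 0) ≤ t 1 := fun t => by
    simp only [S, mem_upperClosure, Set.exists_range_iff, Finsupp.le_def, Fin.forall_fin_two,
      Finsupp.coe_add, Pi.add_apply, Finsupp.single_eq_same, ne_eq, zero_ne_one, one_ne_zero,
      not_false_eq_true, Finsupp.single_eq_of_ne, add_zero, zero_add]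
    exact ⟨fun ⟨a, ha, hfa⟩ => (hf ha).trans hfa, fun h => ⟨t 0, le_rfl, h⟩⟩
  rw [hI, finrank_quotient_span_monomial_image, ← natCard_snd_lt_eq_sum_range hf hN]
  exact Nat.card_congr <| (Finsupp.equivFunOnFinite.trans (piFinTwoEquiv fun _ => ℕ)).subtypeEquiv
    fun t => by simp [hS]

section Tower

variable {R : Type*} [CommSemiring R] {i : ℕ → ℕ}

lemma sum_Icc_add_tsub_le {j l : ℕ} (hpos : ∀ k ∈ Icc 1 l, 1 ≤ i k) (hjl : j ≤ l) :
    ∑ k ∈ Icc 1 j, i k + (l - j) ≤ ∑ k ∈ Icc 1 l, i k := by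
  induction l, hjl using Nat.le_induction with
  | base => simp
  | succ l hjl ih =>
    rw [sum_Icc_succ_top (by omega)]
    have := ih fun k hk => hpos k (Icc_subset_Icc_right l.le_succ hk)
    have := hpos (l + 1) (by simp)
    omega

lemma prod_span_X_X_pow_eq_staircaseIdeal {s : ℕ} (hi : MonotoneOn i (Set.Icc 1 s)) :
    ∏ k ∈ Icc 1 s, Ideal.span {(X 0 : MvPolynomial (Fin 2) R), X 1 ^ i k} =
      staircaseIdeal R (fun a => ∑ k ∈ Icc 1 (s - a), i k) := by
  induction s with
  | zero => simp [staircaseIdeal_eq_top]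
  | succ s ih =>
    rw [prod_Icc_succ_top (by omega), ih (hi.mono (Set.Icc_subset_Icc_right s.le_succ)),
      span_X_X_pow_eq_staircaseIdeal_ite]
    refine staircaseIdeal_mul (fun b c => ?_) (fun a => ?_)
    · split_ifs with hc
      · subst hc
        rcases le_or_gt b s with hb | hb
        · have : i (s - b + 1) ≤ i (s + 1) :=
            hi ⟨by omega, by omega⟩ ⟨by omega, le_rfl⟩ (by omega)
          rw [show s + 1 - (b + 0) = s - b + 1 by omega, sum_Icc_succ_top (by omega)]
          omega
        · simp [show s + 1 - b = 0 by omega]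
      · simpa using sum_le_sum_of_subset (f := i)
          (Icc_subset_Icc_right (a := 1) (show s + 1 - (b + c) ≤ s - b by omega))
    · rcases a with _ | a
      · exact ⟨0, 0, le_rfl, by simp [sum_Icc_succ_top]⟩
      · exact ⟨a, 1, le_rfl, by simp⟩

lemma staircaseIdeal_sum_Icc_mul_tsub {s : ℕ} (hpos : ∀ k ∈ Icc 1 s, 1 ≤ i k) (n : ℕ) :
    staircaseIdeal R (fun a => ∑ k ∈ Icc 1 (s - a), i k) * staircaseIdeal R (n - ·) =
      staircaseIdeal R (fun a => ∑ k ∈ Icc 1 (s - a), i k + (n - (a - s))) := by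
  refine staircaseIdeal_mul (fun b c => ?_) (fun a => ?_)
  · have := sum_Icc_add_tsub_le (i := i) (j := s - (b + c)) (l := s - b)
      (fun k hk => hpos k (Icc_subset_Icc_right (by omega) hk)) (by omega)
    omega
  · rcases le_or_gt a s with ha | ha
    · exact ⟨a, 0, by omega, by omega⟩
    · exact ⟨s, a - s, by omega, by simp [Nat.sub_eq_zero_of_le ha.le]⟩

end Tower

lemma sum_range_tsub_mul_two (n : ℕ) : (∑ a ∈ range n, (n - a)) * 2 = n * (n + 1) := by
  induction n with
  | zero => simp
  | succ n ih =>
    simp only [sum_range_succ', Nat.add_sub_add_right, Nat.sub_zero, add_mul, ih]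
    ring

lemma sum_range_add_tsub_tsub (g : ℕ → ℕ) (hg : g 0 = 0) (s n : ℕ) :
    ∑ a ∈ range (s + n), (g (s - a) + (n - (a - s))) =
      ∑ a ∈ range s, g (s - a) + (n * (n + 1) + 2 * n * s) / 2 := by
  rw [sum_add_distrib, sum_range_add, sum_range_add (fun a => n - (a - s))]
  have hg0 : ∑ a ∈ range n, g (s - (s + a)) = 0 := by simp [hg]
  have hleft : ∑ a ∈ range s, (n - (a - s)) = s * n := by
    rw [sum_congr rfl fun a ha => by rw [Nat.sub_eq_zero_of_le (mem_range.1 ha).le, Nat.sub_zero]]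
    simp
  have hright : ∑ a ∈ range n, (n - (s + a - s)) = ∑ a ∈ range n, (n - a) := by simp
  have htotal : n * (n + 1) + 2 * n * s = (∑ a ∈ range n, (n - a) + s * n) * 2 := by
    rw [add_mul, sum_range_tsub_mul_two]
    ring
  rw [hg0, hleft, hright, htotal, Nat.mul_div_cancel _ two_pos]
  ring

theorem colength_tower_mul_power_of_max_ideal_general (s : ℕ) (i : ℕ → ℕ) (hi1 : 1 < i 1)
    (hmono : ∀ k, 1 ≤ k → k < s → i k < i (k + 1)) (n : ℕ) :
    Module.finrank ℂ
      (MvPolynomial (Fin 2) ℂ ⧸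
        ((∏ k ∈ Finset.Icc 1 s,
            Ideal.span {(X 0 : MvPolynomial (Fin 2) ℂ), X 1 ^ i k}) * mxy ^ n)) =
    Module.finrank ℂ
      (MvPolynomial (Fin 2) ℂ ⧸
        ∏ k ∈ Finset.Icc 1 s,
          Ideal.span {(X 0 : MvPolynomial (Fin 2) ℂ), X 1 ^ i k}) +
    (n * (n + 1) + 2 * n * s) / 2 := by
  have hi : StrictMonoOn i (Set.Icc 1 s) :=
    strictMonoOn_of_lt_succ Set.ordConnected_Icc fun k _ hk hk1 => hmono k hk.1 (by
      simp only [Order.succ_eq_add_one, Set.mem_Icc] at hk1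
      omega)
  have hpos : ∀ k ∈ Icc 1 s, 1 ≤ i k := fun k hk => by
    obtain ⟨h1k, hks⟩ := mem_Icc.1 hk
    have := hi.monotoneOn ⟨le_rfl, h1k.trans hks⟩ ⟨h1k, hks⟩ h1k
    omega
  have hanti : Antitone fun a => ∑ k ∈ Icc 1 (s - a), i k := fun a b hab =>
    sum_le_sum_of_subset (Icc_subset_Icc_right (by omega))
  rw [prod_span_X_X_pow_eq_staircaseIdeal hi.monotoneOn, mxy,
    span_X_X_pow_eq_staircaseIdeal_tsub, staircaseIdeal_sum_Icc_mul_tsub hpos,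
    finrank_quotient_staircaseIdeal (N := s + n)
      (fun a b hab => add_le_add (hanti hab) (by omega)) (by simp),
    finrank_quotient_staircaseIdeal (N := s) hanti (by simp)]
  exact sum_range_add_tsub_tsub (fun j => ∑ k ∈ Icc 1 j, i k) rfl s n

/-- For a monomial tower `K = ∏_{k=1}^s (x, y^{iₖ})` with `1 < i₁ < ⋯ < i_s` and any `n ≥ 1`,
one has `dim_ℂ ℂ[x,y]/(K·m^n) = dim_ℂ ℂ[x,y]/K + (n(n+1) + 2ns)/2`. -/
theorem colength_tower_mul_power_of_max_ideal (s : ℕ) (hs : 1 ≤ s) (i : ℕ → ℕ) (hi1 : 1 < i 1)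
    (hmono : ∀ k, 1 ≤ k → k < s → i k < i (k + 1)) (n : ℕ) (hn : 1 ≤ n) :
    Module.finrank ℂ
      (MvPolynomial (Fin 2) ℂ ⧸
        ((∏ k ∈ Finset.Icc 1 s,
            Ideal.span {(X 0 : MvPolynomial (Fin 2) ℂ), X 1 ^ i k}) * mxy ^ n)) =
    Module.finrank ℂ
      (MvPolynomial (Fin 2) ℂ ⧸
        ∏ k ∈ Finset.Icc 1 s,
          Ideal.span {(X 0 : MvPolynomial (Fin 2) ℂ), X 1 ^ i k}) +
    (n * (n + 1) + 2 * n * s) / 2 :=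
  colength_tower_mul_power_of_max_ideal_general s i hi1 hmono n
end

section
/- Let S be a commutative Noetherian ring equipped with an ℕ-grading (a GradedRing structure 𝒜 on S), and let 𝔭 ⊆ S be a homogeneous prime ideal which is a minimal prime of S and such that there exists a homogeneous element of degree 1 not belonging to 𝔭. Then the length of the localization S_𝔭 as a module over itself equals the length of the homogeneous localization S_(𝔭) (the degree-zero part of the localization at homogeneous elements outside 𝔭) as a module over itself. -/
/-- The length of a module `M` over a ring `R`, valued in `ℕ∞`: the Krull dimension of the
lattice of submodules of `M`. -/
noncomputable def moduleLength (R M : Type*) [Ring R] [AddCommGroup M] [Module R M] : ℕ∞ :=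
  WithBot.unbotD 0 (Order.krullDim (Submodule R M))

/-!
The map `S_(𝔭) → S_𝔭` is a local homomorphism such that every ideal `I` of `S_(𝔭)` is contracted
from its extension, and the maximal ideal of `S_(𝔭)` extends to that of `S_𝔭`. For the first,
clear denominators in `a ∈ I S_𝔭` to get an equation `s a = ∑ rₖ xₖ` in `S` between homogeneous
elements of one degree, with `s ∉ 𝔭`; as `𝔭` is homogeneous some component `sⱼ` avoids `𝔭`,
and comparing components of the right degree expresses `a` in `I` with coefficients `rₖⱼ / sⱼ`.
For the second, a homogeneous `pᵢ ∈ 𝔭` of degree `i` is `(pᵢ / fⁱ) fⁱ` for a degree-one `f ∉ 𝔭`.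
Extension of ideals is then strictly monotone and preserves covering pairs (in a local ring these
are the pairs `I ⋖ I + (x)` with `𝔪 x ⊆ I`), so it turns a composition series of `S_(𝔭)` into one
of `S_𝔭` and infinite chains into infinite chains.
-/

namespace Ideal

open IsLocalRing

variable {R : Type*} [CommRing R] [IsLocalRing R] {I K : Ideal R}

theorem covBy_sup_span_singleton {x : R} (hx : x ∉ I) (hmx : maximalIdeal R * span {x} ≤ I) :
    I ⋖ I ⊔ span {x} := by
  refine ⟨left_lt_sup.mpr fun h ↦ hx (h (mem_span_singleton_self x)), fun J hIJ hJ ↦ ?_⟩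
  obtain ⟨p, hpJ, hpI⟩ := SetLike.exists_of_lt hIJ
  obtain ⟨i, hi, y, hy, rfl⟩ := Submodule.mem_sup.mp (hJ.le hpJ)
  obtain ⟨t, rfl⟩ := mem_span_singleton'.mp hy
  by_cases ht : IsUnit t
  · have hxJ : x ∈ J := by
      have : t * x ∈ J := by simpa using J.sub_mem hpJ (hIJ.le hi)
      simpa [← mul_assoc] using J.mul_mem_left (↑ht.unit⁻¹) this
    exact hJ.not_ge (sup_le hIJ.le ((span_singleton_le_iff_mem J).mpr hxJ))
  · exact hpI (I.add_mem hi (hmx (mul_mem_mul ht (mem_span_singleton_self x))))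

theorem _root_.CovBy.exists_eq_sup_span_singleton (h : I ⋖ K) :
    ∃ x ∉ I, K = I ⊔ span {x} ∧ maximalIdeal R * span {x} ≤ I := by
  obtain ⟨x, hxK, hxI⟩ := SetLike.exists_of_lt h.lt
  have hspan : span {x} ≤ K := (span_singleton_le_iff_mem K).mpr hxK
  refine ⟨x, hxI, ?_, ?_⟩
  · refine ((h.eq_or_eq le_sup_left (sup_le h.le hspan)).resolve_left fun e ↦ hxI ?_).symm
    exact e ▸ mem_sup_right (mem_span_singleton_self x)
  have hle : I ⊔ maximalIdeal R * span {x} = I := by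
    refine (h.eq_or_eq le_sup_left (sup_le h.le (mul_le_right.trans hspan :
      maximalIdeal R * span {x} ≤ K))).resolve_right fun e ↦ hxI ?_
    -- `x = i + t x` with `t ∈ 𝔪`, and `1 - t` is a unit
    obtain ⟨i, hi, y, hy, hxy⟩ := Submodule.mem_sup.mp (e ▸ hxK)
    obtain ⟨t, ht, rfl⟩ := mem_mul_span_singleton.mp hy
    have hunit : IsUnit (1 - t) := isUnit_one_sub_self_of_mem_nonunits t ht
    have : (1 - t) * x ∈ I := by rwa [show (1 - t) * x = i by linear_combination -hxy]
    simpa [← mul_assoc] using I.mul_mem_left (↑hunit.unit⁻¹) this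
  exact sup_eq_left.mp hle

theorem map_covBy_map {A B : Type*} [CommRing A] [CommRing B] [IsLocalRing A] [IsLocalRing B]
    {φ : A →+* B} (hcomap : ∀ I : Ideal A, (I.map φ).comap φ = I)
    (hmax : (maximalIdeal A).map φ = maximalIdeal B) {I K : Ideal A} (h : I ⋖ K) :
    I.map φ ⋖ K.map φ := by
  obtain ⟨x, hxI, rfl, hmx⟩ := h.exists_eq_sup_span_singleton
  rw [map_sup, map_span, Set.image_singleton]
  refine covBy_sup_span_singleton (fun hx ↦ hxI (hcomap I ▸ hx)) ?_
  rw [← hmax, ← Set.image_singleton, ← map_span, ← Ideal.map_mul]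
  exact map_mono hmx

end Ideal

open Ideal in
theorem IsLocalRing.length_eq_of_comap_map {A B : Type*} [CommRing A] [CommRing B] [IsLocalRing A]
    [IsLocalRing B] {φ : A →+* B} (hcomap : ∀ I : Ideal A, (I.map φ).comap φ = I)
    (hmax : (maximalIdeal A).map φ = maximalIdeal B) :
    Module.length A A = Module.length B B := by
  have hmono : StrictMono (map φ : Ideal A → Ideal B) :=
    Monotone.strictMono_of_injective (fun _ _ ↦ map_mono) (Function.LeftInverse.injective hcomap)
  refine le_antisymm ?_ ?_
  · rw [← WithBot.coe_le_coe, Module.coe_length, Module.coe_length]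
    exact Order.krullDim_le_of_strictMono _ hmono
  by_cases htop : Module.length A A = ⊤
  · exact htop ▸ le_top
  obtain ⟨s, hs_bot, hs_top⟩ :=
    isFiniteLength_iff_exists_compositionSeries.mp (Module.length_ne_top_iff.mp htop)
  let t : CompositionSeries (Ideal B) := s.map ⟨map φ, map_covBy_map hcomap hmax⟩
  rw [← Module.length_compositionSeries s hs_bot hs_top,
    ← Module.length_compositionSeries t (by simp [t, hs_bot])
      (by simp only [t, RelSeries.last_map, hs_top]; exact map_top φ)]
  rfl

section Graded

open DirectSum SetLike

variable {ι S σ : Type*} [AddCancelCommMonoid ι] [DecidableEq ι] [CommRing S] [SetLike σ S]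
  [AddSubgroupClass σ S] {𝒜 : ι → σ} [GradedRing 𝒜]

theorem Ideal.IsHomogeneous.exists_decompose_notMem_mul_eq_sum {𝔭 : Ideal S}
    (hhom : 𝔭.IsHomogeneous 𝒜) {s : S} (hs : s ∉ 𝔭) {i : ι} {n : S} (hn : n ∈ 𝒜 i) {α : Type*}
    {T : Finset α} {r m : α → S} (hm : ∀ k ∈ T, m k ∈ 𝒜 i) (h : s * n = ∑ k ∈ T, r k * m k) :
    ∃ j, (decompose 𝒜 s j : S) ∉ 𝔭 ∧
      decompose 𝒜 s j * n = ∑ k ∈ T, (decompose 𝒜 (r k) j : S) * m k := by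
  obtain ⟨j, hj⟩ := not_forall.mp ((hhom.mem_iff).not.mp hs)
  refine ⟨j, hj, ?_⟩
  have hproj := congrArg (GradedRing.proj 𝒜 (j + i)) h
  simp only [map_sum, GradedRing.proj_apply] at hproj
  rw [← coe_decompose_mul_add_of_right_mem 𝒜 hn, hproj]
  exact Finset.sum_congr rfl fun k hk ↦ coe_decompose_mul_add_of_right_mem 𝒜 (hm k hk)

namespace HomogeneousLocalization

theorem exists_common_den {x : Submonoid S} (T : Finset (HomogeneousLocalization 𝒜 x)) :
    ∃ (i : ι) (d : 𝒜 i) (hd : (d : S) ∈ x), ∀ y ∈ T, ∃ n : 𝒜 i, y = mk ⟨i, n, d, hd⟩ := by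
  classical
  induction T using Finset.induction_on with
  | empty => exact ⟨0, ⟨1, GradedOne.one_mem⟩, x.one_mem, by simp⟩
  | insert y T _ ih =>
    obtain ⟨i, d, hd, hT⟩ := ih
    refine ⟨y.deg + i, ⟨y.den * d, mul_mem_graded y.den_mem_deg d.2⟩, mul_mem y.den_mem hd, ?_⟩
    simp only [Finset.mem_insert, forall_eq_or_imp]
    refine ⟨⟨⟨y.num * d, mul_mem_graded y.num_mem_deg d.2⟩, ?_⟩, fun z hz ↦ ?_⟩
    · ext
      rw [eq_num_div_den, val_mk, Localization.mk_eq_mk_iff, Localization.r_iff_exists]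
      exact ⟨1, by ring⟩
    · obtain ⟨n, rfl⟩ := hT z hz
      refine ⟨⟨y.den * n, mul_mem_graded y.den_mem_deg n.2⟩, ?_⟩
      ext
      rw [val_mk, val_mk, Localization.mk_eq_mk_iff, Localization.r_iff_exists]
      exact ⟨1, by ring⟩

variable {𝔭 : Ideal S} [𝔭.IsPrime]

theorem AtPrime.mk_mem_span_of_mul_eq_sum (hhom : 𝔭.IsHomogeneous 𝒜) {i : ι} {n d : 𝒜 i}
    (hd : (d : S) ∈ 𝔭.primeCompl) {α : Type*} {T : Finset α} {m : α → 𝒜 i} {s : S}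
    (hs : s ∉ 𝔭) {r : α → S} (h : s * n = ∑ k ∈ T, r k * m k) :
    mk ⟨i, n, d, hd⟩ ∈ Ideal.span ((fun k ↦ mk ⟨i, m k, d, hd⟩) '' (T : Set α)) := by
  obtain ⟨j, hj, hsum⟩ := hhom.exists_decompose_notMem_mul_eq_sum hs n.2 (fun k _ ↦ (m k).2) h
  have hj' : (decompose 𝒜 s j : S) ∈ 𝔭.primeCompl := hj
  have hcomb : mk ⟨i, n, d, hd⟩ =
      ∑ k ∈ T, mk ⟨j, decompose 𝒜 (r k) j, decompose 𝒜 s j, hj'⟩ * mk ⟨i, m k, d, hd⟩ := by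
    rw [ext_iff_val]
    simp only [← algebraMap_apply (x := 𝔭.primeCompl), map_sum, map_mul]
    simp only [algebraMap_apply, val_mk, Localization.mk_mul]
    refine .trans ?_ (Localization.mk_sum (fun k ↦ (decompose 𝒜 (r k) j : S) * m k) T
      (⟨_, hj'⟩ * ⟨d, hd⟩))
    rw [← hsum, Localization.mk_eq_mk_iff, Localization.r_iff_exists]
    exact ⟨1, by simp only [Submonoid.coe_mul]; ring⟩
  rw [hcomb]
  exact Ideal.sum_mem _ fun k hk ↦ Ideal.mul_mem_left _ _ (Ideal.subset_span ⟨k, hk, rfl⟩)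

theorem AtPrime.mem_span_of_val_mem_span (hhom : 𝔭.IsHomogeneous 𝒜)
    {T : Finset (AtPrime 𝒜 𝔭)} {a : AtPrime 𝒜 𝔭}
    (ha : a.val ∈ Ideal.span (val '' (T : Set (AtPrime 𝒜 𝔭)))) : a ∈ Ideal.span T := by
  classical
  obtain ⟨i, d, hd, hT⟩ := exists_common_den (insert a T)
  choose! n hn using hT
  have hval : ∀ y ∈ insert a T, y.val = Localization.mk (n y : S) ⟨d, hd⟩ := fun y hy ↦
    (congrArg val (hn y hy)).trans (val_mk _)
  obtain ⟨c, hc⟩ := (Fintype.mem_span_image_iff_exists_fun _).mp ha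
  obtain ⟨b, hb⟩ := IsLocalization.exist_integer_multiples 𝔭.primeCompl Finset.univ c
  choose r hr using fun k ↦ hb k (Finset.mem_univ k)
  have hB : Localization.mk ((b : S) * n a) ⟨d, hd⟩ =
      Localization.mk (∑ k : (T : Set (AtPrime 𝒜 𝔭)), r k * n k) ⟨d, hd⟩ := calc
    _ = (b : S) • a.val := by
      rw [hval a (Finset.mem_insert_self a T), Localization.smul_mk, smul_eq_mul]
    _ = ∑ k : (T : Set (AtPrime 𝒜 𝔭)), ((b : S) • c k) * k.1.val := by
      simp only [← hc, Finset.smul_sum, smul_eq_mul, smul_mul_assoc]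
    _ = ∑ k : (T : Set (AtPrime 𝒜 𝔭)), Localization.mk (r k * n k) ⟨d, hd⟩ := by
      refine Finset.sum_congr rfl fun k _ ↦ ?_
      rw [← hr k, hval k (Finset.mem_insert_of_mem k.2), ← Localization.mk_one_eq_algebraMap,
        Localization.mk_mul, one_mul]
    _ = _ := (Localization.mk_sum _ _ _).symm
  obtain ⟨u, hu⟩ := Localization.r_iff_exists.mp (Localization.mk_eq_mk_iff.mp hB)
  have hspan := mk_mem_span_of_mul_eq_sum hhom hd (α := (T : Set (AtPrime 𝒜 𝔭)))
    (T := Finset.univ) (m := fun k ↦ n k)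
    (s := u * d * b) (mul_mem (mul_mem u.2 hd) b.2) (r := fun k ↦ u * d * r k)
    (by simpa only [mul_assoc, Finset.mul_sum] using hu)
  rw [hn a (Finset.mem_insert_self a T)]
  refine Ideal.span_mono ?_ hspan
  rintro _ ⟨k, -, rfl⟩
  change mk _ ∈ (T : Set (AtPrime 𝒜 𝔭))
  rw [← hn k (Finset.mem_insert_of_mem k.2)]
  exact k.2

theorem AtPrime.comap_map_algebraMap (hhom : 𝔭.IsHomogeneous 𝒜) (I : Ideal (AtPrime 𝒜 𝔭)) :
    (I.map (algebraMap (AtPrime 𝒜 𝔭) (Localization.AtPrime 𝔭))).comap (algebraMap _ _) = I := by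
  classical
  refine le_antisymm (fun a ha ↦ ?_) Ideal.le_comap_map
  obtain ⟨V, hVI, haV⟩ := Submodule.mem_span_finite_of_mem_span ha
  obtain ⟨T, hTI, rfl⟩ := Finset.subset_set_image_iff.mp hVI
  rw [Finset.coe_image] at haV
  exact Ideal.span_le.mpr hTI (mem_span_of_val_mem_span hhom haV)

instance AtPrime.isLocalHom_algebraMap :
    IsLocalHom (algebraMap (AtPrime 𝒜 𝔭) (Localization.AtPrime 𝔭)) :=
  ⟨fun y hy ↦ (isUnit_iff_isUnit_val 𝒜 𝔭 y).mp hy⟩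

theorem AtPrime.mk_mem_maximalIdeal {c : NumDenSameDeg 𝒜 𝔭.primeCompl} (h : (c.num : S) ∈ 𝔭) :
    mk c ∈ IsLocalRing.maximalIdeal (AtPrime 𝒜 𝔭) := by
  rw [← IsLocalRing.maximalIdeal_comap (algebraMap _ (Localization.AtPrime 𝔭)), Ideal.mem_comap,
    algebraMap_apply, val_mk, Localization.mk_eq_mk']
  exact (IsLocalization.AtPrime.mk'_mem_maximal_iff _ 𝔭 _ _).mpr h

end HomogeneousLocalization

end Graded

open DirectSum SetLike in
theorem HomogeneousLocalization.AtPrime.map_maximalIdeal {S σ : Type*} [CommRing S] [SetLike σ S]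
    [AddSubgroupClass σ S] {𝒜 : ℕ → σ} [GradedRing 𝒜] {𝔭 : Ideal S} [𝔭.IsPrime]
    (hhom : 𝔭.IsHomogeneous 𝒜) (hdeg1 : ∃ f ∈ 𝒜 1, f ∉ 𝔭) :
    (IsLocalRing.maximalIdeal (AtPrime 𝒜 𝔭)).map (algebraMap _ (Localization.AtPrime 𝔭)) =
      IsLocalRing.maximalIdeal (Localization.AtPrime 𝔭) := by
  classical
  obtain ⟨f, hf1, hf𝔭⟩ := hdeg1
  refine le_antisymm (IsLocalRing.map_maximalIdeal_le _) ?_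
  rw [← Localization.AtPrime.map_eq_maximalIdeal, Ideal.map_le_iff_le_comap]
  intro p hp
  rw [Ideal.mem_comap, ← sum_support_decompose 𝒜 p, map_sum]
  refine Ideal.sum_mem _ fun i _ ↦ ?_
  have hfi : f ^ i ∈ 𝒜 i := by simpa using pow_mem_graded i hf1
  let q : AtPrime 𝒜 𝔭 := mk ⟨i, decompose 𝒜 p i, ⟨f ^ i, hfi⟩, 𝔭.primeCompl.pow_mem hf𝔭 i⟩
  have hq : algebraMap S (Localization.AtPrime 𝔭) (decompose 𝒜 p i) =
      algebraMap _ _ q * algebraMap S _ (f ^ i) := by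
    rw [algebraMap_apply, val_mk, ← Localization.mk_one_eq_algebraMap,
      ← Localization.mk_one_eq_algebraMap, Localization.mk_mul, Localization.mk_eq_mk_iff,
      Localization.r_iff_exists]
    exact ⟨1, by simp only [Submonoid.coe_mul]; ring⟩
  rw [hq]
  exact Ideal.mul_mem_right _ _ (Ideal.mem_map_of_mem _ (mk_mem_maximalIdeal (hhom i hp)))

theorem moduleLength_eq_length (R M : Type*) [Ring R] [AddCommGroup M] [Module R M] :
    moduleLength R M = Module.length R M := by
  rw [moduleLength, ← Module.coe_length, WithBot.unbotD_coe]

theorem length_localization_eq_length_homogeneousLocalization_general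
    {S : Type*} [CommRing S]
    (𝒜 : ℕ → Submodule ℤ S) [GradedRing 𝒜]
    (𝔭 : Ideal S) [𝔭.IsPrime]
    (hhom : 𝔭.IsHomogeneous 𝒜)
    (hdeg1 : ∃ a ∈ 𝒜 1, a ∉ 𝔭) :
    moduleLength (Localization.AtPrime 𝔭) (Localization.AtPrime 𝔭) =
      moduleLength (HomogeneousLocalization.AtPrime 𝒜 𝔭)
        (HomogeneousLocalization.AtPrime 𝒜 𝔭) := by
  rw [moduleLength_eq_length, moduleLength_eq_length]
  exact (IsLocalRing.length_eq_of_comap_map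
    (HomogeneousLocalization.AtPrime.comap_map_algebraMap hhom)
    (HomogeneousLocalization.AtPrime.map_maximalIdeal hhom hdeg1)).symm

/-- Let `S` be a commutative Noetherian ring with an `ℕ`-grading `𝒜`, and let `𝔭 ⊆ S` be a
homogeneous prime which is a minimal prime of `S` and such that some homogeneous element of
degree `1` does not belong to `𝔭`.  Then the length of the localization `S_𝔭` as a module over
itself equals the length of the homogeneous localization `S_(𝔭)` as a module over itself. -/
theorem length_localization_eq_length_homogeneousLocalization
    {S : Type*} [CommRing S] [IsNoetherianRing S]
    (𝒜 : ℕ → Submodule ℤ S) [GradedRing 𝒜]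
    (𝔭 : Ideal S) [𝔭.IsPrime]
    (hhom : 𝔭.IsHomogeneous 𝒜)
    (hmin : 𝔭 ∈ minimalPrimes S)
    (hdeg1 : ∃ a ∈ 𝒜 1, a ∉ 𝔭) :
    moduleLength (Localization.AtPrime 𝔭) (Localization.AtPrime 𝔭) =
      moduleLength (HomogeneousLocalization.AtPrime 𝒜 𝔭)
        (HomogeneousLocalization.AtPrime 𝒜 𝔭) :=
  length_localization_eq_length_homogeneousLocalization_general 𝒜 𝔭 hhom hdeg1
end
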